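/- arXiv:2412.09194 — 2 statements merged into one kernel-verified Lean document; each statement's English description precedes it below -/
import Mathlib

section
/- Let r > 1, K > 0, and for large λ let s_{1,λ} be the smaller positive solution of e^s = s^{r-1} λ K. Then s_{1,λ} = (λK)^{-1/(r-1)} (1 + δ(λ)) where δ(λ) = (1/(r-1))(λK)^{-1/(r-1)}(1 + o(1)) as λ → ∞; in particular s_{1,λ} · (λK)^{1/(r-1)} → 1 as λ → ∞. -/
/-!
Write `c = r - 1`, `A = λK` and `s = s_{1,λ}`. Taking logarithms in `eˢ = s^c A` gives
`s · A^{1/c} = e^{s/c}`. Since `s^c A - eˢ` is `-1` at `0` and positive at any fixed `ε > 0`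
once `A` is large, there is a root in `(0, ε]`, so `s → 0⁺`; hence `s · A^{1/c} → 1`.
With `t = s/c` the quantity `(s A^{1/c} - 1) c A^{1/c}` equals `(eᵗ - 1)/t · eᵗ`, which tends
to `exp' 0 · exp 0 = 1`.
-/

open Filter Topology Real

lemma mul_rpow_inv_eq_exp_div_of_exp_eq {c A s : ℝ} (hc : 0 < c) (hA : 0 < A) (hs : 0 < s)
    (heq : exp s = s ^ c * A) : s * A ^ (1 / c) = exp (s / c) := by
  have hlog : s = c * log s + log A := by
    simpa [log_mul (rpow_pos_of_pos hs c).ne' hA.ne', log_rpow hs] using congrArg log heq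
  rw [rpow_def_of_pos hA, ← exp_log hs, ← exp_add, exp_log hs]
  congr 1
  field_simp
  linarith

lemma exists_pos_le_exp_eq_rpow_mul {c A ε : ℝ} (hc : 0 < c) (hε : 0 < ε)
    (hA : exp ε < ε ^ c * A) : ∃ x, 0 < x ∧ x ≤ ε ∧ exp x = x ^ c * A := by
  have hcont : ContinuousOn (fun s : ℝ => s ^ c * A - exp s) (Set.Icc 0 ε) :=
    ((continuousOn_id.rpow_const fun _ _ => Or.inr hc.le).mul continuousOn_const).sub
      continuous_exp.continuousOn
  have hzero : (0 : ℝ) ∈ Set.Ioc (0 ^ c * A - exp 0) (ε ^ c * A - exp ε) := by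
    constructor
    · simp [zero_rpow hc.ne']
    · linarith
  obtain ⟨x, ⟨hx0, hxε⟩, hx⟩ := intermediate_value_Ioc hε.le hcont hzero
  exact ⟨x, hx0, hxε, by linarith⟩

lemma tendsto_nhdsGT_zero_of_le_roots {α : Type*} {l : Filter α} {c : ℝ} (hc : 0 < c)
    {A s₁ : α → ℝ} (hA : Tendsto A l atTop)
    (h : ∀ᶠ a in l, 0 < s₁ a ∧ ∀ s, 0 < s → exp s = s ^ c * A a → s₁ a ≤ s) :
    Tendsto s₁ l (𝓝[>] 0) := by
  refine tendsto_nhdsWithin_iff.2 ⟨tendsto_order.2 ⟨fun a ha => ?_, fun ε hε => ?_⟩,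
    h.mono fun a ha => ha.1⟩
  · exact h.mono fun x hx => ha.trans hx.1
  · have hroot : ∀ᶠ a in l, exp (ε / 2) < (ε / 2) ^ c * A a :=
      (hA.const_mul_atTop (by positivity)).eventually_gt_atTop _
    filter_upwards [h, hroot] with a hmin ha
    obtain ⟨x, hx0, hxε, hx⟩ := exists_pos_le_exp_eq_rpow_mul hc (half_pos hε) ha
    linarith [hmin.2 x hx0 hx]

lemma tendsto_exp_sub_one_div_mul_exp :
    Tendsto (fun t => (exp t - 1) / t * exp t) (𝓝[>] 0) (𝓝 1) := by
  have hslope := (hasDerivAt_exp 0).tendsto_slope_zero_right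
  have hexp : Tendsto exp (𝓝[>] 0) (𝓝 1) :=
    exp_zero ▸ continuous_exp.continuousAt.tendsto.mono_left nhdsWithin_le_nhds
  simpa [div_eq_inv_mul] using hslope.mul hexp

/-- The smaller solution `s_{1,λ}` of `eˢ = s^{r-1} λ K` satisfies
`s_{1,λ} = (λK)^{-1/(r-1)}(1+δ(λ))` with `δ(λ) = (1/(r-1))(λK)^{-1/(r-1)}(1+o(1))`;
in particular `s_{1,λ}(λK)^{1/(r-1)} → 1` as `λ → ∞`. -/
theorem small_solution_asymptotics
    (r K : ℝ) (hr : 1 < r) (hK : 0 < K) (s₁ : ℝ → ℝ)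
    (h : ∀ lam : ℝ, Real.exp (r - 1) < lam * K * (r - 1) ^ (r - 1) →
      0 < s₁ lam ∧ Real.exp (s₁ lam) = (s₁ lam) ^ (r - 1) * (lam * K) ∧
      ∀ s : ℝ, 0 < s → Real.exp s = s ^ (r - 1) * (lam * K) → s₁ lam ≤ s) :
    Tendsto (fun lam : ℝ =>
        (s₁ lam * (lam * K) ^ (1 / (r - 1)) - 1) * (r - 1) * (lam * K) ^ (1 / (r - 1)))
      atTop (nhds 1) ∧
    Tendsto (fun lam : ℝ => s₁ lam * (lam * K) ^ (1 / (r - 1))) atTop (nhds 1) := by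
  set c := r - 1
  have hc : 0 < c := by linarith
  have hroot : ∀ᶠ lam in atTop, 0 < lam * K ∧ 0 < s₁ lam ∧
      exp (s₁ lam) = s₁ lam ^ c * (lam * K) ∧
      ∀ s, 0 < s → exp s = s ^ c * (lam * K) → s₁ lam ≤ s := by
    have hlarge := (tendsto_id.atTop_mul_const (by positivity : 0 < K * c ^ c)).eventually_gt_atTop
      (exp c)
    filter_upwards [hlarge, eventually_gt_atTop 0] with lam hlam hpos
    exact ⟨by positivity, h lam (by simpa [mul_assoc] using hlam)⟩
  have hs : Tendsto s₁ atTop (𝓝[>] 0) :=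
    tendsto_nhdsGT_zero_of_le_roots hc (tendsto_id.atTop_mul_const hK)
      (hroot.mono fun _ h => ⟨h.2.1, h.2.2.2⟩)
  have ht : Tendsto (fun lam => s₁ lam / c) atTop (𝓝[>] 0) :=
    tendsto_nhdsWithin_iff.2 ⟨by simpa using (tendsto_nhdsWithin_iff.1 hs).1.div_const c,
      (tendsto_nhdsWithin_iff.1 hs).2.mono fun _ h => div_pos h hc⟩
  have key : ∀ᶠ lam in atTop, s₁ lam * (lam * K) ^ (1 / c) = exp (s₁ lam / c) :=
    hroot.mono fun _ h => mul_rpow_inv_eq_exp_div_of_exp_eq hc h.1 h.2.1 h.2.2.1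
  constructor
  · refine (tendsto_exp_sub_one_div_mul_exp.comp ht).congr' ?_
    filter_upwards [key, hroot] with lam hk hpos
    have hA : (lam * K) ^ (1 / c) = exp (s₁ lam / c) / s₁ lam := by
      rw [eq_div_iff hpos.2.1.ne', mul_comm, hk]
    rw [Function.comp_apply, hk, hA]
    field_simp
  · have hexp : Tendsto (fun lam => exp (s₁ lam / c)) atTop (𝓝 1) :=
      exp_zero ▸ (continuous_exp.tendsto 0).comp (ht.mono_right nhdsWithin_le_nhds)
    exact hexp.congr' (key.mono fun _ h => h.symm)
end

section
/- Let r > 1, K > 0, and let s_{1,λ} be the smaller positive solution of e^s = s^{r-1} λ K for large λ. Then λ^{1/(r-1)} s_{1,λ} → K^{-1/(r-1)} as λ → ∞, i.e., s_{1,λ} is asymptotic to (λK)^{-1/(r-1)}. -/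
open Filter

/-- The smaller solution `s_{1,λ}` of `eˢ = s^{r-1} λ K` satisfies
`λ^{1/(r-1)} s_{1,λ} → K^{-1/(r-1)}` as `λ → ∞`. -/
theorem small_solution_first_order_asymptotics
    (r K : ℝ) (hr : 1 < r) (hK : 0 < K) (s₁ : ℝ → ℝ)
    (h : ∀ lam : ℝ, Real.exp (r - 1) < lam * K * (r - 1) ^ (r - 1) →
      0 < s₁ lam ∧ Real.exp (s₁ lam) = (s₁ lam) ^ (r - 1) * (lam * K) ∧
      ∀ s : ℝ, 0 < s → Real.exp s = s ^ (r - 1) * (lam * K) → s₁ lam ≤ s) :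
    Tendsto (fun lam : ℝ => lam ^ (1 / (r - 1)) * s₁ lam) atTop
      (nhds (K ^ (-(1 / (r - 1))))) := by
  set t := r - 1 with htdef
  have ht : 0 < t := by simp only [htdef]; linarith
  have htne : t ≠ 0 := ht.ne'
  have hmul : Tendsto (fun lam : ℝ => lam * K * t ^ t) atTop atTop :=
    (tendsto_id.atTop_mul_const hK).atTop_mul_const (Real.rpow_pos_of_pos ht t)
  have hthr : ∀ᶠ lam in atTop, Real.exp t < lam * K * t ^ t :=
    hmul.eventually_gt_atTop (Real.exp t)
  -- Step 1: eventually `0 < s₁ lam ≤ ε`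
  have key : ∀ ε : ℝ, 0 < ε → ∀ᶠ lam in atTop, 0 < s₁ lam ∧ s₁ lam ≤ ε := by
    intro ε hε
    filter_upwards [hthr, eventually_gt_atTop (Real.exp ε / (ε ^ t * K)),
      eventually_gt_atTop 0] with lam hlam hlam2 hlam0
    obtain ⟨hpos, heq, hmin⟩ := h lam hlam
    refine ⟨hpos, ?_⟩
    have hlK : 0 < lam * K := mul_pos hlam0 hK
    set c := min (ε / 2) ((1 / 2) * (lam * K) ^ (-(1 / t))) with hc
    have hcpos : 0 < c := lt_min (by linarith) (by positivity)
    have hcε : c ≤ ε := (min_le_left _ _).trans (by linarith)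
    have hct : c ^ t * (lam * K) < 1 := by
      have h1 : c ^ t ≤ ((1 / 2) * (lam * K) ^ (-(1 / t))) ^ t :=
        Real.rpow_le_rpow hcpos.le (min_le_right _ _) ht.le
      have h2 : ((1 / 2 : ℝ) * (lam * K) ^ (-(1 / t))) ^ t
          = (1 / 2 : ℝ) ^ t * (lam * K)⁻¹ := by
        rw [Real.mul_rpow (by norm_num) (Real.rpow_nonneg hlK.le _),
          ← Real.rpow_mul hlK.le]
        congr 1
        rw [show (-(1 / t)) * t = -1 by field_simp, Real.rpow_neg_one]
      have h3 : (1 / 2 : ℝ) ^ t < 1 :=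
        Real.rpow_lt_one (by norm_num) (by norm_num) ht
      have h4 : c ^ t * (lam * K) ≤ (1 / 2 : ℝ) ^ t := by
        rw [h2] at h1
        calc c ^ t * (lam * K) ≤ (1 / 2 : ℝ) ^ t * (lam * K)⁻¹ * (lam * K) :=
              mul_le_mul_of_nonneg_right h1 hlK.le
          _ = (1 / 2 : ℝ) ^ t := by field_simp
      linarith
    have hec : (1 : ℝ) < Real.exp c := by
      rw [← Real.exp_zero]; exact Real.exp_lt_exp.mpr hcpos
    have hfc : 0 ≤ Real.exp c - c ^ t * (lam * K) := by linarith
    have hfε : Real.exp ε - ε ^ t * (lam * K) ≤ 0 := by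
      have hεtK : 0 < ε ^ t * K := mul_pos (Real.rpow_pos_of_pos hε t) hK
      have h5 : Real.exp ε < lam * (ε ^ t * K) := (div_lt_iff₀ hεtK).mp hlam2
      nlinarith
    have hcont : ContinuousOn (fun s : ℝ => Real.exp s - s ^ t * (lam * K))
        (Set.Icc c ε) :=
      (Real.continuous_exp.sub
        (((continuous_id.rpow_const (fun x => Or.inr ht.le))).mul
          continuous_const)).continuousOn
    obtain ⟨s, hsmem, hs0⟩ := intermediate_value_Icc' hcε hcont ⟨hfε, hfc⟩
    have hspos : 0 < s := hcpos.trans_le hsmem.1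
    have hseq : Real.exp s = s ^ t * (lam * K) := by
      have : Real.exp s - s ^ t * (lam * K) = 0 := hs0
      linarith
    exact (hmin s hspos hseq).trans hsmem.2
  -- Step 2: s₁ → 0
  have hs0 : Tendsto s₁ atTop (nhds 0) := by
    rw [Metric.tendsto_nhds]
    intro ε hε
    filter_upwards [key (ε / 2) (by linarith)] with lam ⟨h1, h2⟩
    rw [Real.dist_eq, sub_zero, abs_of_pos h1]
    linarith
  -- Step 3: rewrite and conclude
  have heq' : ∀ᶠ lam in atTop,
      lam ^ (1 / t) * s₁ lam = (Real.exp (s₁ lam) / K) ^ (1 / t) := by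
    filter_upwards [hthr, eventually_gt_atTop 0] with lam hlam hlam0
    obtain ⟨hpos, heq, -⟩ := h lam hlam
    have hdiv : Real.exp (s₁ lam) / K = lam * (s₁ lam) ^ t := by
      rw [heq]; field_simp
    rw [hdiv, Real.mul_rpow hlam0.le (Real.rpow_nonneg hpos.le _), one_div,
      Real.rpow_rpow_inv hpos.le htne]
  have hlim : Tendsto (fun lam => (Real.exp (s₁ lam) / K) ^ (1 / t)) atTop
      (nhds ((1 / K) ^ (1 / t))) := by
    have h1 : Tendsto (fun lam => Real.exp (s₁ lam) / K) atTop (nhds (1 / K)) := by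
      have h2 := (Real.continuous_exp.tendsto 0).comp hs0
      simpa using h2.div_const K
    exact h1.rpow_const (Or.inl (by positivity))
  have hKpow : (1 / K : ℝ) ^ (1 / t) = K ^ (-(1 / t)) := by
    rw [one_div, Real.rpow_neg hK.le, ← Real.inv_rpow hK.le]
  exact Tendsto.congr' (EventuallyEq.symm heq') (hKpow ▸ hlim)
end
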